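/- Every 2-coloring of the edges of the complete 4-partite graph K_{4×3} (four parts of size 3) contains a matching 3K_2 in the first color or a cycle C_7 in the second color; moreover there is a 2-coloring of the edges of K_{4×2} containing neither. Hence m_4(3K_2, C_7) = 3. -/

import Mathlib

open SimpleGraph

/-- The complete multipartite graph `K_{j x t}` with `j` parts, each of size `t`. -/
def multiK (j t : ℕ) : SimpleGraph (Fin j × Fin t) where
  Adj a b := a.1 ≠ b.1
  symm := ⟨fun _ _ h => Ne.symm h⟩
  loopless := ⟨fun _ h => h rfl⟩

/-- `G` contains a copy of `H`. -/
def Contains {α β : Type*} (G : SimpleGraph α) (H : SimpleGraph β) : Prop :=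
  ∃ f : β → α, Function.Injective f ∧ ∀ ⦃a b⦄, H.Adj a b → G.Adj (f a) (f b)

/-- The monochromatic subgraph of `G` in color `i` under the edge-coloring `c`. -/
def colorClass {α : Type*} {k : ℕ} (G : SimpleGraph α) (c : Sym2 α → Fin k) (i : Fin k) :
    SimpleGraph α where
  Adj a b := G.Adj a b ∧ c s(a, b) = i
  symm := ⟨fun _ _ h => ⟨h.1.symm, by rw [Sym2.eq_swap]; exact h.2⟩⟩
  loopless := ⟨fun a h => G.loopless.irrefl a h.1⟩

/-- The stripe `nK₂`: the graph consisting of `n` pairwise disjoint edges. -/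
def stripe (n : ℕ) : SimpleGraph (Fin n × Fin 2) where
  Adj a b := a.1 = b.1 ∧ a.2 ≠ b.2
  symm := ⟨fun _ _ h => ⟨h.1.symm, h.2.symm⟩⟩
  loopless := ⟨fun _ h => h.2 rfl⟩

/-- Every 3-coloring of the edges of `K_{j x t}` yields a copy of `K_{1,2}` in color 0,
or of `P₄` in color 1, or of `nK₂` in color 2. -/
def Arrows3 (j t n : ℕ) : Prop :=
  ∀ c : Sym2 (Fin j × Fin t) → Fin 3,
    Contains (colorClass (multiK j t) c 0) (pathGraph 3) ∨
    Contains (colorClass (multiK j t) c 1) (pathGraph 4) ∨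
    Contains (colorClass (multiK j t) c 2) (stripe n)

/-- Every 2-coloring of the edges of `K_{j x t}` yields a copy of `nK₂` in color 0
or of `C₇` in color 1. -/
def ArrowsC7 (j t n : ℕ) : Prop :=
  ∀ c : Sym2 (Fin j × Fin t) → Fin 2,
    Contains (colorClass (multiK j t) c 0) (stripe n) ∨
    Contains (colorClass (multiK j t) c 1) (cycleGraph 7)

/-!
If the first colour has no `3K₂`, the at most four vertices of a maximal matching of that colour
meet all its edges, so the remaining vertices span only second-colour edges between parts. Any
seven of them meet each part in at most three vertices, and such a set always carries a cycle
through all seven vertices that changes part at every step. Conversely, giving the first colour to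
exactly the edges that meet one part of `K_{4×2}` leaves a matching cover of two vertices in the
first colour and only six vertices in the second.
-/

open Finset

section Contains

variable {α β : Type*} {G : SimpleGraph α}

theorem Contains.card_le [Fintype α] [Fintype β] {H : SimpleGraph β} (h : Contains G H) :
    Fintype.card β ≤ Fintype.card α :=
  let ⟨_, hf, _⟩ := h
  Fintype.card_le_of_injective _ hf

theorem Contains.card_le_of_adj_mem [Fintype β] {H : SimpleGraph β} (h : Contains G H)
    (hH : ∀ b, ∃ b', H.Adj b b') {U : Finset α} (hU : ∀ x y, G.Adj x y → x ∈ U) :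
    Fintype.card β ≤ #U := by
  obtain ⟨f, hf, hadj⟩ := h
  refine card_le_card_of_injOn f (fun b _ => ?_) hf.injOn
  obtain ⟨b', hbb'⟩ := hH b
  exact hU _ _ (hadj hbb')

theorem not_contains_stripe_of_cover {W : Finset α} (hW : ∀ x y, G.Adj x y → x ∈ W ∨ y ∈ W)
    {n : ℕ} (hn : #W < n) : ¬ Contains G (stripe n) := by
  rintro ⟨f, hf, hadj⟩
  have hend : ∀ i : Fin n, ∃ e, f (i, e) ∈ W := fun i =>
    (hW _ _ (hadj (a := (i, 0)) (b := (i, 1)) ⟨rfl, Fin.zero_ne_one⟩)).elim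
      (fun h => ⟨0, h⟩) (fun h => ⟨1, h⟩)
  choose e he using hend
  have hinj : Function.Injective fun i => f (i, e i) := fun i i' h => congrArg Prod.fst (hf h)
  have := card_le_card_of_injOn (s := univ) _ (fun i _ => he i) hinj.injOn
  simp only [card_univ, Fintype.card_fin] at this
  omega

theorem contains_stripe_succ {n : ℕ} {f : Fin n × Fin 2 → α} (hf : Function.Injective f)
    (hadj : ∀ ⦃a b⦄, (stripe n).Adj a b → G.Adj (f a) (f b)) {x y : α} (hxy : G.Adj x y)
    (hx : x ∉ Set.range f) (hy : y ∉ Set.range f) : Contains G (stripe (n + 1)) := by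
  let g : Fin (n + 1) × Fin 2 → α := fun p =>
    Fin.lastCases (![x, y] p.2) (fun i => f (i, p.2)) p.1
  have hg_last : ∀ e, g (Fin.last n, e) = ![x, y] e := fun e => Fin.lastCases_last ..
  have hg_cast : ∀ i e, g (i.castSucc, e) = f (i, e) := fun i e => Fin.lastCases_castSucc ..
  have hnew : ∀ e i e', ![x, y] e ≠ f (i, e') := by
    intro e i e' h
    fin_cases e
    · exact hx ⟨_, h.symm⟩
    · exact hy ⟨_, h.symm⟩
  refine ⟨g, ?_, ?_⟩
  · rintro ⟨i, e⟩ ⟨i', e'⟩ h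
    induction i using Fin.lastCases <;> induction i' using Fin.lastCases <;>
      simp only [hg_last, hg_cast] at h
    · fin_cases e <;> fin_cases e' <;> simp_all [hxy.ne, hxy.ne.symm]
    · exact (hnew _ _ _ h).elim
    · exact (hnew _ _ _ h.symm).elim
    · cases hf h; rfl
  · rintro ⟨i, e⟩ ⟨i', e'⟩ ⟨rfl, he⟩
    induction i using Fin.lastCases
    · simp only [hg_last]
      fin_cases e <;> fin_cases e' <;> simp_all [hxy.symm]
    · simp only [hg_cast]
      exact hadj ⟨rfl, he⟩

theorem contains_stripe_zero : Contains G (stripe 0) :=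
  ⟨fun p => p.1.elim0, fun p => p.1.elim0, fun p => p.1.elim0⟩

/-- The vertices of a maximal matching cover every edge. -/
theorem Contains.stripe_succ_or_exists_cover {n : ℕ} (h : Contains G (stripe n)) :
    Contains G (stripe (n + 1)) ∨
      ∃ W : Finset α, #W ≤ 2 * n ∧ ∀ x y, G.Adj x y → x ∈ W ∨ y ∈ W := by
  obtain ⟨f, hf, hadj⟩ := h
  by_cases h : ∃ x y, G.Adj x y ∧ x ∉ Set.range f ∧ y ∉ Set.range f
  · obtain ⟨x, y, hxy, hx, hy⟩ := h
    exact .inl (contains_stripe_succ hf hadj hxy hx hy)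
  · push Not at h
    refine .inr ⟨univ.map ⟨f, hf⟩, by simp [mul_comm], fun x y hxy => ?_⟩
    simp only [mem_map, mem_univ, true_and, Function.Embedding.coeFn_mk]
    by_cases hx : x ∈ Set.range f
    · exact .inl hx
    · exact .inr (h x y hxy hx)

theorem contains_stripe_succ_or_exists_cover (G : SimpleGraph α) (n : ℕ) :
    Contains G (stripe (n + 1)) ∨
      ∃ W : Finset α, #W ≤ 2 * n ∧ ∀ x y, G.Adj x y → x ∈ W ∨ y ∈ W := by
  induction n with
  | zero => simpa using contains_stripe_zero.stripe_succ_or_exists_cover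
  | succ n ih =>
    obtain h | ⟨W, hW, hcover⟩ := ih
    · exact h.stripe_succ_or_exists_cover
    · exact .inr ⟨W, by omega, hcover⟩

theorem contains_cycleGraph_of_adj_succ {n : ℕ} [NeZero n] {f : Fin n → α}
    (hf : Function.Injective f) (hadj : ∀ i, G.Adj (f i) (f (i + 1))) :
    Contains G (cycleGraph n) := by
  have hsucc : ∀ a b : Fin n, (a - b).val = 1 → a = b + 1 := fun a b h =>
    eq_add_of_sub_eq' (Fin.ext (by rw [h, Fin.val_one', Nat.mod_eq_of_lt (h ▸ (a - b).isLt)]))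
  refine ⟨f, hf, fun a b hab => ?_⟩
  rcases cycleGraph_adj'.mp hab with h | h
  · rw [hsucc a b h]; exact (hadj b).symm
  · rw [hsucc b a h]; exact hadj a

end Contains

section Arrangement

variable {α β : Type*} [LinearOrder α] [PartialOrder β] [DecidableEq β] {p : α → β}
  {S : Finset α} {k : ℕ}

theorem val_sub_lt_of_fiber_card_le (hp : Monotone p) (hfiber : ∀ b, #{x ∈ S | p x = b} ≤ k)
    {m : ℕ} {s : Fin m → α} (hs : StrictMono s) (hsS : ∀ i, s i ∈ S) {i i' : Fin m}
    (hii' : i ≤ i') (heq : p (s i) = p (s i')) : i'.val - i.val < k := by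
  have hmaps : Set.MapsTo s (Icc i i') (S.filter (p · = p (s i))) := by
    intro l hl
    rw [coe_Icc] at hl
    rw [coe_filter]
    exact ⟨hsS l, le_antisymm (heq ▸ hp (hs.monotone hl.2)) (hp (hs.monotone hl.1))⟩
  have := (card_le_card_of_injOn s hmaps hs.injective.injOn).trans (hfiber _)
  rw [Fin.card_Icc] at this
  omega

/-- Listing `S = {s₀ < … < s₂ₖ}`, the arrangement `s₀, s_{k+1}, s₁, s_{k+2}, …` (the index
advancing by `k + 1` mod `2k + 1`) puts consecutive elements `k` or `k + 1` places apart in the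
sorted list, too far for both to lie in one fiber of size at most `k`. -/
theorem exists_cyclic_arrangement (hp : Monotone p) (hS : #S = 2 * k + 1)
    (hfiber : ∀ b, #{x ∈ S | p x = b} ≤ k) :
    ∃ f : Fin (2 * k + 1) → α, Function.Injective f ∧ (∀ i, f i ∈ S) ∧
      ∀ i, p (f i) ≠ p (f (i + 1)) := by
  have hk : 0 < k := by
    obtain ⟨x, hx⟩ := card_pos.1 (by omega : 0 < #S)
    exact (card_pos.2 ⟨x, mem_filter.2 ⟨hx, rfl⟩⟩ : 0 < #{y ∈ S | p y = p x}).trans_le (hfiber _)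
  set s := S.orderEmbOfFin hS
  have hsS : ∀ i, s i ∈ S := S.orderEmbOfFin_mem hS
  set c : Fin (2 * k + 1) := ⟨k + 1, by omega⟩
  have hc : c.val = k + 1 := rfl
  have hcc : c + c = 1 := Fin.ext <| by
    rw [Fin.val_add, hc, Fin.val_one', show k + 1 + (k + 1) = 1 + (2 * k + 1) by ring,
      Nat.add_mod_right]
  refine ⟨fun i => s (c * i), fun i i' h => ?_, fun i => hsS _, fun i => ?_⟩
  · calc i = (c + c) * i := by rw [hcc, one_mul]
      _ = (c + c) * i' := by rw [add_mul, add_mul, s.injective h]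
      _ = i' := by rw [hcc, one_mul]
  · intro heq
    simp only [mul_add, mul_one] at heq
    set u := c * i
    have hu_lt := u.isLt
    have hu : (u + c).val = u.val + (k + 1) ∨ (u + c).val + k = u.val := by
      rw [Fin.val_add, hc]
      by_cases h : u.val + (k + 1) < 2 * k + 1
      · exact .inl (Nat.mod_eq_of_lt h)
      · right; rw [Nat.mod_eq_sub_mod (by omega), Nat.mod_eq_of_lt (by omega)]; omega
    rcases hu with h | h
    · have := val_sub_lt_of_fiber_card_le hp hfiber s.strictMono hsS
        (i := u) (i' := u + c) (Fin.le_def.2 (by omega)) heq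
      omega
    · have := val_sub_lt_of_fiber_card_le hp hfiber s.strictMono hsS
        (i := u + c) (i' := u) (Fin.le_def.2 (by omega)) heq.symm
      omega

end Arrangement

section Multipartite

variable {j t : ℕ}

theorem exists_cyclic_arrangement_prod {k : ℕ} (htk : t ≤ k) {S : Finset (Fin j × Fin t)}
    (hS : #S = 2 * k + 1) :
    ∃ f : Fin (2 * k + 1) → Fin j × Fin t, Function.Injective f ∧ (∀ i, f i ∈ S) ∧
      ∀ i, (f i).1 ≠ (f (i + 1)).1 := by
  have hfiber : ∀ b, #{x ∈ S.map toLex.toEmbedding | (ofLex x).1 = b} ≤ k := fun b =>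
    le_trans (card_le_card_of_injOn (t := univ) (fun x => (ofLex x).2) (fun _ _ => mem_univ _)
      fun x hx y hy h => Prod.ext ((mem_filter.1 hx).2.trans (mem_filter.1 hy).2.symm) h)
      (by simpa using htk)
  obtain ⟨f, hf, hfS, hpart⟩ :=
    exists_cyclic_arrangement Prod.Lex.monotone_fst_ofLex (by rwa [card_map]) hfiber
  refine ⟨fun i => ofLex (f i), ofLex.injective.comp hf, fun i => ?_, hpart⟩
  obtain ⟨x, hx, hxf⟩ := mem_map.1 (hfS i)
  simpa [← hxf] using hx

theorem contains_stripe_or_cycleGraph {n k : ℕ} (htk : t ≤ k)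
    (hjt : 2 * n + (2 * k + 1) ≤ j * t) (c : Sym2 (Fin j × Fin t) → Fin 2) :
    Contains (colorClass (multiK j t) c 0) (stripe (n + 1)) ∨
      Contains (colorClass (multiK j t) c 1) (cycleGraph (2 * k + 1)) := by
  refine (contains_stripe_succ_or_exists_cover _ n).imp_right fun ⟨W, hW, hcover⟩ => ?_
  obtain ⟨S, hSW, hS⟩ := exists_subset_card_eq (s := univ \ W) (n := 2 * k + 1)
    (by rw [card_sdiff_of_subset (subset_univ W), card_univ, Fintype.card_prod, Fintype.card_fin,
      Fintype.card_fin]; omega)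
  obtain ⟨f, hf, hfS, hpart⟩ := exists_cyclic_arrangement_prod htk hS
  have hfW : ∀ i, f i ∉ W := fun i => (mem_sdiff.1 (hSW (hfS i))).2
  refine contains_cycleGraph_of_adj_succ hf fun i =>
    ⟨hpart i, Fin.eq_one_of_ne_zero _ fun h0 => ?_⟩
  exact (hcover _ _ ⟨hpart i, h0⟩).elim (hfW i) (hfW (i + 1))

end Multipartite

section FirstPartColoring

variable {j t : ℕ}

def firstPartColoring (j t : ℕ) : Sym2 (Fin (j + 1) × Fin t) → Fin 2 :=
  Sym2.lift ⟨fun a b => if a.1 = 0 ∨ b.1 = 0 then 0 else 1, fun _ _ => by simp only [or_comm]⟩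

theorem not_contains_stripe_firstPartColoring :
    ¬ Contains (colorClass (multiK (j + 1) t) (firstPartColoring j t) 0) (stripe (t + 1)) := by
  refine not_contains_stripe_of_cover (W := {0} ×ˢ univ) ?_ (by simp)
  rintro x y ⟨-, hxy⟩
  simp only [firstPartColoring, Sym2.lift_mk] at hxy
  split_ifs at hxy with h
  · simpa only [mem_product, mem_singleton, mem_univ, and_true] using h
  · exact absurd hxy (by decide)

theorem not_contains_firstPartColoring_one {β : Type*} [Fintype β] {H : SimpleGraph β}
    (hH : ∀ b, ∃ b', H.Adj b b') (hjt : j * t < Fintype.card β) :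
    ¬ Contains (colorClass (multiK (j + 1) t) (firstPartColoring j t) 1) H := by
  intro h
  refine (Contains.card_le_of_adj_mem h hH (U := (univ.erase 0) ×ˢ univ) ?_).not_gt
    (by simpa using hjt)
  rintro x y ⟨-, hxy⟩
  simp only [firstPartColoring, Sym2.lift_mk] at hxy
  split_ifs at hxy with h
  · exact absurd hxy (by decide)
  · simp only [mem_product, mem_erase, mem_univ, and_true]
    tauto

end FirstPartColoring

theorem stmt18 :
    ArrowsC7 4 3 3 ∧
    (∃ c : Sym2 (Fin 4 × Fin 2) → Fin 2,
      ¬ Contains (colorClass (multiK 4 2) c 0) (stripe 3) ∧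
      ¬ Contains (colorClass (multiK 4 2) c 1) (cycleGraph 7)) ∧
    IsLeast {t : ℕ | 0 < t ∧ ArrowsC7 4 t 3} 3 := by
  have upper : ArrowsC7 4 3 3 :=
    contains_stripe_or_cycleGraph (n := 2) (k := 3) le_rfl (by norm_num)
  have lower : ∃ c : Sym2 (Fin 4 × Fin 2) → Fin 2,
      ¬ Contains (colorClass (multiK 4 2) c 0) (stripe 3) ∧
      ¬ Contains (colorClass (multiK 4 2) c 1) (cycleGraph 7) :=
    ⟨firstPartColoring 3 2, not_contains_stripe_firstPartColoring,
      not_contains_firstPartColoring_one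
        (fun b => ⟨b + 1, cycleGraph_adj.2 (.inr (add_sub_cancel_left b 1))⟩) (by simp)⟩
  refine ⟨upper, lower, ⟨by norm_num, upper⟩, fun t ⟨ht, hA⟩ => ?_⟩
  by_contra! hlt
  interval_cases t
  · rcases hA fun _ => 0 with h | h <;> simpa using h.card_le
  · obtain ⟨c, h0, h1⟩ := lower
    exact (hA c).elim h0 h1
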